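/- Let n ≥ 2 and 1 ≤ k ≤ n-1. For 1 ≤ p ≤ n-1 let w_p ∈ S_n send p to n and each q with p < q ≤ n to q-1, and let w_n = 1. Then the set {w ∈ S_n : w⁻¹(i) < w⁻¹(i+1) for all 1 ≤ i ≤ n-2, and w(i) < w(i+1) for all k ≤ i ≤ n-1} equals {w_p : 1 ≤ p < k} ∪ {1}. -/

import Mathlib

/-!
Write `n = m + 1`. The first condition says that `w⁻¹` is strictly increasing on the first `m`
points, so `w⁻¹ ∘ castSucc` is a strictly increasing map `Fin m → Fin (m + 1)` whose range misses
exactly `p := w⁻¹ (last m)`; the only such map is `p.succAbove`, which forces `w = w_p`.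
Among the values of `w_p`, the only descent is at `p` (where the value is the maximum `m`), so the
second condition holds exactly when `p` lies outside `[k - 1, m)`.
-/

open Equiv Fin

theorem Fin.strictMono_iff_forall_lt_of_succ_lt {α : Type*} [Preorder α] {m : ℕ}
    {f : Fin m → α} : StrictMono f ↔ ∀ (i : ℕ) (h : i + 1 < m), f ⟨i, by omega⟩ < f ⟨i + 1, h⟩ := by
  cases m with
  | zero => simp [Subsingleton.strictMono]
  | succ l => simp [Fin.strictMono_iff_lt_succ, Fin.forall_iff]

namespace Equiv.Perm

variable {m : ℕ}

theorem comp_castSucc_eq_succAbove_of_strictMono (σ : Perm (Fin (m + 1)))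
    (hσ : StrictMono (σ ∘ castSucc)) : σ ∘ castSucc = (σ (last m)).succAbove := by
  refine (hσ.range_inj (strictMono_succAbove _)).1 ?_
  rw [Set.range_comp, range_succAbove, ← succAbove_last, range_succAbove,
    Set.image_compl_eq σ.bijective, Set.image_singleton]

theorem strictMono_inv_comp_castSucc_iff (w : Perm (Fin (m + 1))) :
    StrictMono (⇑w⁻¹ ∘ castSucc) ↔
      ∃ p : Fin (m + 1), w p = last m ∧ ∀ j, w (p.succAbove j) = castSucc j := by
  constructor
  · intro h
    refine ⟨w⁻¹ (last m), by simp, fun j => ?_⟩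
    rw [eq_comm, ← Perm.inv_eq_iff_eq]
    exact congrFun (w⁻¹.comp_castSucc_eq_succAbove_of_strictMono h) j
  · rintro ⟨p, -, hw⟩
    have : ⇑w⁻¹ ∘ castSucc = p.succAbove := funext fun j => Perm.inv_eq_iff_eq.2 (hw j).symm
    exact this ▸ strictMono_succAbove p

theorem forall_val_apply_eq_ite_iff (w : Perm (Fin (m + 1))) (p : Fin (m + 1)) :
    (∀ a, (w a : ℕ) = if a = p then m else if (p : ℕ) < a then a - 1 else a) ↔
      w p = last m ∧ ∀ j, w (p.succAbove j) = castSucc j := by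
  rw [forall_iff_succAbove p, if_pos rfl, Fin.ext_iff, val_last]
  refine and_congr Iff.rfl (forall_congr' fun j => ?_)
  rw [if_neg (succAbove_ne p j), Fin.ext_iff, val_castSucc]
  simp only [Fin.val_fin_lt]
  rcases lt_or_ge (castSucc j) p with h | h
  · rw [succAbove_of_castSucc_lt _ _ h, if_neg h.not_gt, val_castSucc]
  · rw [succAbove_of_le_castSucc _ _ h, if_pos (h.trans_lt castSucc_lt_succ), val_succ,
      Nat.add_sub_cancel]

theorem apply_lt_apply_succ_iff_of_val_apply_eq_ite {w : Perm (Fin (m + 1))} {p : Fin (m + 1)}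
    (hw : ∀ a, (w a : ℕ) = if a = p then m else if (p : ℕ) < a then a - 1 else a)
    (i : Fin (m + 1)) (hi : (i : ℕ) + 1 < m + 1) :
    w i < w ⟨i + 1, hi⟩ ↔ i ≠ p := by
  rw [Fin.lt_def, hw, hw]
  simp only [Ne, Fin.ext_iff]
  have := p.isLt
  split_ifs <;> omega

end Equiv.Perm

/-- For `n ≥ 2`, `1 ≤ k ≤ n-1`, the set of `w ∈ S_n` with
`w⁻¹(i) < w⁻¹(i+1)` for `1 ≤ i ≤ n-2` and `w(i) < w(i+1)` for `k ≤ i ≤ n-1`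
(1-based; formalized 0-based on `Fin n`) equals `{w_p : 1 ≤ p < k} ∪ {1}`, where
`w_p` sends `p ↦ n` and `q ↦ q-1` for `p < q ≤ n`, and `w_n = 1` corresponds to the
0-based parameter `p = n-1`. -/
theorem stmt_2 (n k : ℕ) (hn : 2 ≤ n) :
    {w : Equiv.Perm (Fin n) |
        (∀ i : Fin n, ∀ h : (i : ℕ) + 1 ≤ n - 2, w⁻¹ i < w⁻¹ ⟨(i : ℕ) + 1, by omega⟩)
        ∧ (∀ i : Fin n, ∀ h : (i : ℕ) + 1 ≤ n - 1, k - 1 ≤ (i : ℕ) →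
            w i < w ⟨(i : ℕ) + 1, by omega⟩)}
      = {w : Equiv.Perm (Fin n) | ∃ p : Fin n, ((p : ℕ) + 1 < k ∨ (p : ℕ) = n - 1) ∧
          ∀ a : Fin n, ((w a : ℕ) =
            if a = p then n - 1 else if (p : ℕ) < (a : ℕ) then (a : ℕ) - 1 else (a : ℕ))} := by
  obtain ⟨m, rfl⟩ : ∃ m, n = m + 1 := ⟨n - 1, by omega⟩
  ext w
  have hinv : (∀ i : Fin (m + 1), ∀ h : (i : ℕ) + 1 ≤ m + 1 - 2,
      w⁻¹ i < w⁻¹ ⟨(i : ℕ) + 1, by omega⟩) ↔ StrictMono (⇑w⁻¹ ∘ castSucc) := by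
    rw [Fin.strictMono_iff_forall_lt_of_succ_lt]
    exact ⟨fun h i hi => h ⟨i, by omega⟩ (show i + 1 ≤ m + 1 - 2 by omega),
      fun h i _ => h i (by omega)⟩
  simp only [Nat.add_sub_cancel]
  constructor
  · rintro ⟨hA, hB⟩
    obtain ⟨p, hp⟩ := w.strictMono_inv_comp_castSucc_iff.1 (hinv.1 hA)
    rw [← w.forall_val_apply_eq_ite_iff] at hp
    refine ⟨p, ?_, hp⟩
    by_contra! h
    exact (Perm.apply_lt_apply_succ_iff_of_val_apply_eq_ite hp p (by omega)).1
      (hB p (by omega) (by omega)) rfl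
  · rintro ⟨p, hpk, hp⟩
    have hw := (w.forall_val_apply_eq_ite_iff p).1 hp
    refine ⟨hinv.2 (w.strictMono_inv_comp_castSucc_iff.2 ⟨p, hw⟩), fun i hi hki => ?_⟩
    refine (Perm.apply_lt_apply_succ_iff_of_val_apply_eq_ite hp i (by omega)).2 ?_
    rintro rfl
    omega
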